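/- Under assumptions (R0) and (R1) (in particular the equicontinuity condition that for every t∈T, limsup_{s→t} sup_{ω∈M}|M(ω,s)−M(ω,t)|=0, together with existence, uniqueness and uniform well-separation of the minimizers m(t)), the conditional Fréchet mean trajectory t ↦ m(t) is d-continuous at every t∈T, and hence uniformly d-continuous on the compact interval T. -/
import Mathlib


open MeasureTheory Set Filter

noncomputable section

namespace FrechetReg

variable {Ω : Type*} [MeasurableSpace Ω] {M : Type*} [MetricSpace M] [MeasurableSpace M]

/-- Rescaled kernel `K_b(x) = K(x/b)/b`. -/
def Kb (K : ℝ → ℝ) (b x : ℝ) : ℝ := K (x / b) / b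

/-- Population kernel moments `μ_ℓ(t) = E[K_b(U−t)(U−t)^ℓ]`. -/
def kmom (μ : Measure Ω) (U : Ω → ℝ) (K : ℝ → ℝ) (b : ℝ) (ℓ : ℕ) (t : ℝ) : ℝ :=
  ∫ x, Kb K b (U x - t) * (U x - t) ^ ℓ ∂μ

/-- `σ₀²(t) = μ₀(t)μ₂(t) − μ₁(t)²`. -/
def sigma0sq (μ : Measure Ω) (U : Ω → ℝ) (K : ℝ → ℝ) (b t : ℝ) : ℝ :=
  kmom μ U K b 0 t * kmom μ U K b 2 t - (kmom μ U K b 1 t) ^ 2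

/-- Local linear weight `s(u,t,b) = K_b(u−t)[μ₂(t) − μ₁(t)(u−t)]/σ₀²(t)`. -/
def sWeight (μ : Measure Ω) (U : Ω → ℝ) (K : ℝ → ℝ) (b u t : ℝ) : ℝ :=
  Kb K b (u - t) * (kmom μ U K b 2 t - kmom μ U K b 1 t * (u - t)) / sigma0sq μ U K b t

/-- Localized Fréchet objective `L_b(z,t) = E[s(U,t,b) d(V,z)²]`. -/
def Lobj (μ : Measure Ω) (U : Ω → ℝ) (V : Ω → M) (K : ℝ → ℝ) (b : ℝ) (z : M) (t : ℝ) : ℝ :=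
  ∫ x, sWeight μ U K b (U x) t * dist (V x) z ^ 2 ∂μ

/-- Empirical kernel moments `μ̂_ℓ(t)`. -/
def kmomE (Useq : ℕ → Ω → ℝ) (K : ℝ → ℝ) (b : ℝ) (n ℓ : ℕ) (t : ℝ) (x : Ω) : ℝ :=
  (n : ℝ)⁻¹ * ∑ j ∈ Finset.range n, Kb K b (Useq j x - t) * (Useq j x - t) ^ ℓ

/-- Empirical variance proxy `σ̂₀²(t)`. -/
def sigma0sqE (Useq : ℕ → Ω → ℝ) (K : ℝ → ℝ) (b : ℝ) (n : ℕ) (t : ℝ) (x : Ω) : ℝ :=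
  kmomE Useq K b n 0 t x * kmomE Useq K b n 2 t x - (kmomE Useq K b n 1 t x) ^ 2

/-- Empirical local linear weight `ŝ(u,t,b)`. -/
def sWeightE (Useq : ℕ → Ω → ℝ) (K : ℝ → ℝ) (b : ℝ) (n : ℕ) (u t : ℝ) (x : Ω) : ℝ :=
  Kb K b (u - t) * (kmomE Useq K b n 2 t x - kmomE Useq K b n 1 t x * (u - t)) /
    sigma0sqE Useq K b n t x

/-- Empirical local Fréchet objective `L̂_n(z,t) = n⁻¹ Σ_j ŝ(U_j,t,b) d(V_j,z)²`. -/
def LobjE (Useq : ℕ → Ω → ℝ) (Vseq : ℕ → Ω → M) (K : ℝ → ℝ) (b : ℝ) (n : ℕ)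
    (z : M) (t : ℝ) (x : Ω) : ℝ :=
  (n : ℝ)⁻¹ * ∑ j ∈ Finset.range n, sWeightE Useq K b n (Useq j x) t x * dist (Vseq j x) z ^ 2

/-- Assumption (K0) on the kernel `K`. -/
def KernelAssumption (K : ℝ → ℝ) : Prop :=
  (∀ x, 0 ≤ K x) ∧ ((∫ x, K x) = 1) ∧ (∀ x, K (-x) = K x) ∧ UniformContinuous K ∧
    Integrable (fun x => K x * x ^ 4) ∧ Integrable (fun x => K x ^ 2 * x ^ 6) ∧
    Differentiable ℝ K ∧ (∃ C, ∀ x ∈ Function.support K, |deriv K x| ≤ C) ∧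
    Integrable (fun x => x ^ 2 * |deriv K x| * Real.sqrt (abs (x * Real.log (abs x))))

/-- The statement that `Mfun z` is a (measurable) version of the conditional expectation
`t ↦ E[d(V,z)² | U = t]`. -/
def IsCondFrechetObjective (μ : Measure Ω) (U : Ω → ℝ) (V : Ω → M)
    (Mfun : M → ℝ → ℝ) : Prop :=
  (∀ z : M, Measurable (Mfun z)) ∧
  ∀ z : M, ∀ A : Set ℝ, MeasurableSet A →
    ∫ x in U ⁻¹' A, dist (V x) z ^ 2 ∂μ = ∫ x in U ⁻¹' A, Mfun z (U x) ∂μ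

/-- Assumption (R0): densities and regularity, where `fU` is the marginal density of `U`,
`fUV (·, z)` is the conditional density of `U` given `V = z`, and `Mfun z t = E[d(V,z)²|U=t]`. -/
def AssumptionR0 (μ : Measure Ω) (U : Ω → ℝ) (V : Ω → M) (τ : ℝ)
    (fU : ℝ → ℝ) (fUV : ℝ → M → ℝ) (Mfun : M → ℝ → ℝ) : Prop :=
  (μ.map U = volume.withDensity fun t => ENNReal.ofReal (fU t)) ∧
  (∀ (A : Set ℝ) (B : Set M), MeasurableSet A → MeasurableSet B →
    μ {x | U x ∈ A ∧ V x ∈ B}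
      = ∫⁻ z in B, ∫⁻ t in A, ENNReal.ofReal (fUV t z) ∂volume ∂(μ.map V)) ∧
  ContinuousOn fU (Icc 0 τ) ∧ (∀ z, ContinuousOn (fun t => fUV t z) (Icc 0 τ)) ∧
  ContDiffOn ℝ 2 fU (Ioo 0 τ) ∧ (∀ z, ContDiffOn ℝ 2 (fun t => fUV t z) (Ioo 0 τ)) ∧
  (∃ c > 0, ∀ t ∈ Icc (0:ℝ) τ, c ≤ fU t) ∧
  (∃ C, ∀ t ∈ Ioo (0:ℝ) τ, |deriv (deriv fU) t| ≤ C) ∧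
  (∃ C, ∀ z, ∀ t ∈ Ioo (0:ℝ) τ, |deriv (deriv (fun s => fUV s z)) t| ≤ C) ∧
  (∀ E : Set M, IsOpen E →
    ContinuousOn (fun t => (∫ z in E, fUV t z ∂(μ.map V)) / fU t) (Icc 0 τ)) ∧
  (∀ t ∈ Icc (0:ℝ) τ, ∀ ε > 0, ∃ δ > 0, ∀ s ∈ Icc (0:ℝ) τ, |s - t| < δ →
    ∀ z : M, |Mfun z s - Mfun z t| ≤ ε)

/-- Assumption (R1): existence, uniqueness (the empirical one `P`-a.s.) and uniform
well-separation of the minimizers `m(t)`, `l_b(t)` and `l̂(t)`. -/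
def AssumptionR1 (μ : Measure Ω) (U : Ω → ℝ) (V : Ω → M) (τ : ℝ) (K : ℝ → ℝ)
    (b : ℕ → ℝ) (Useq : ℕ → Ω → ℝ) (Vseq : ℕ → Ω → M)
    (Mfun : M → ℝ → ℝ) (mfun : ℝ → M) (lfun : ℝ → ℝ → M) (lhat : ℕ → Ω → ℝ → M) : Prop :=
  (∀ t ∈ Icc (0:ℝ) τ, (∀ z, Mfun (mfun t) t ≤ Mfun z t) ∧
    ∀ z, (∀ y, Mfun z t ≤ Mfun y t) → z = mfun t) ∧
  (∀ bv : ℝ, 0 < bv → ∀ t ∈ Icc (0:ℝ) τ,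
    (∀ z, Lobj μ U V K bv (lfun bv t) t ≤ Lobj μ U V K bv z t) ∧
    ∀ z, (∀ y, Lobj μ U V K bv z t ≤ Lobj μ U V K bv y t) → z = lfun bv t) ∧
  (∀ n : ℕ, ∀ᵐ x ∂μ, ∀ t ∈ Icc (0:ℝ) τ,
    (∀ z, LobjE Useq Vseq K (b n) n (lhat n x t) t x ≤ LobjE Useq Vseq K (b n) n z t x) ∧
    ∀ z, (∀ y, LobjE Useq Vseq K (b n) n z t x ≤ LobjE Useq Vseq K (b n) n y t x) →
      z = lhat n x t) ∧
  (∀ ε > 0, ∃ c > 0, ∀ t ∈ Icc (0:ℝ) τ, ∀ z, ε < dist z (mfun t) →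
    c ≤ Mfun z t - Mfun (mfun t) t) ∧
  (∀ ε > 0, ∃ c > 0, ∃ b0 > 0, ∀ bv : ℝ, 0 < bv → bv < b0 → ∀ t ∈ Icc (0:ℝ) τ, ∀ z,
    ε < dist z (lfun bv t) →
      c ≤ Lobj μ U V K bv z t - Lobj μ U V K bv (lfun bv t) t) ∧
  (∀ ε > 0, ∃ c > 0, Tendsto
    (fun n => μ {x | ∀ t ∈ Icc (0:ℝ) τ, ∀ z, ε < dist z (lhat n x t) →
      c ≤ LobjE Useq Vseq K (b n) n z t x - LobjE Useq Vseq K (b n) n (lhat n x t) t x})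
    atTop (nhds 1))

/-- Covering number (as a real number) of a set `s` by balls of radius `ε`. -/
def covNum (s : Set M) (ε : ℝ) : ℝ :=
  sInf ((fun F : Finset M => (F.card : ℝ)) '' {F : Finset M | s ⊆ ⋃ z ∈ F, Metric.ball z ε})

/-- Assumption (R2): uniform entropy integral bound
`∫₀¹ sup_{t∈T} √(1 + log N(rε, B(m(t),r), d)) dε = O(1)` as `r → 0+`. -/
def AssumptionR2 (τ : ℝ) (mfun : ℝ → M) : Prop :=
  ∃ C : ℝ, ∃ r0 > 0, ∀ r : ℝ, 0 < r → r < r0 →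
    (∫ e in Ioo (0:ℝ) 1, ⨆ t ∈ Icc (0:ℝ) τ,
      Real.sqrt (1 + Real.log (covNum (Metric.ball (mfun t) r) (r * e)))) ≤ C

/-- Assumption (R3): curvature lower bounds near the minimizers, with exponents `β₁, β₂`. -/
def AssumptionR3 (μ : Measure Ω) (U : Ω → ℝ) (V : Ω → M) (τ : ℝ) (K : ℝ → ℝ)
    (Mfun : M → ℝ → ℝ) (mfun : ℝ → M) (lfun : ℝ → ℝ → M) (β₁ β₂ : ℝ) : Prop :=
  (∃ r₁ > 0, ∃ c₁ > 0, ∀ t ∈ Icc (0:ℝ) τ, ∀ z, dist z (mfun t) < r₁ →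
    c₁ * dist z (mfun t) ^ β₁ ≤ Mfun z t - Mfun (mfun t) t) ∧
  (∃ r₂ > 0, ∃ c₂ > 0, ∃ b0 > 0, ∀ bv : ℝ, 0 < bv → bv < b0 →
    ∀ t ∈ Icc (0:ℝ) τ, ∀ z, dist z (lfun bv t) < r₂ →
      c₂ * dist z (lfun bv t) ^ β₂ ≤ Lobj μ U V K bv z t - Lobj μ U V K bv (lfun bv t) t)

end FrechetReg

open FrechetReg

/-- Under (R0) and the relevant part of (R1) (existence, uniqueness and
uniform well-separation of `m(t)`), the conditional Fréchet mean trajectory `t ↦ m(t)` is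
`d`-continuous at every `t ∈ T`, and uniformly `d`-continuous on `T`. -/
theorem conditional_frechet_mean_uniformly_continuous
    {Ω : Type*} [MeasurableSpace Ω] {M : Type*} [MetricSpace M] [MeasurableSpace M]
    [BorelSpace M] [TopologicalSpace.SeparableSpace M]
    (hTB : TotallyBounded (Set.univ : Set M))
    (μ : Measure Ω) [IsProbabilityMeasure μ]
    (τ : ℝ) (hτ : 0 < τ)
    (U : Ω → ℝ) (V : Ω → M) (hU : Measurable U) (hV : Measurable V)
    (hUT : ∀ x, U x ∈ Icc (0:ℝ) τ)
    (Mfun : M → ℝ → ℝ) (hMver : IsCondFrechetObjective μ U V Mfun)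
    (mfun : ℝ → M)
    (fU : ℝ → ℝ) (fUV : ℝ → M → ℝ)
    -- assumption (R0), including the equicontinuity of `M(·,·)`
    (hR0 : AssumptionR0 μ U V τ fU fUV Mfun)
    -- relevant part of assumption (R1): existence, uniqueness and well-separation of `m(t)`
    (hmin : ∀ t ∈ Icc (0:ℝ) τ, (∀ z, Mfun (mfun t) t ≤ Mfun z t) ∧
      ∀ z, (∀ y, Mfun z t ≤ Mfun y t) → z = mfun t)
    (hsep : ∀ ε > 0, ∃ c > 0, ∀ t ∈ Icc (0:ℝ) τ, ∀ z, ε < dist z (mfun t) →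
      c ≤ Mfun z t - Mfun (mfun t) t) :
    (∀ t ∈ Icc (0:ℝ) τ, ContinuousWithinAt mfun (Icc (0:ℝ) τ) t) ∧
    (∀ ε > 0, ∃ δ > 0, ∀ s ∈ Icc (0:ℝ) τ, ∀ t ∈ Icc (0:ℝ) τ, |s - t| < δ →
      dist (mfun s) (mfun t) < ε) := by
  -- Key quantitative estimate
  have key : ∀ ε > 0, ∀ t ∈ Icc (0:ℝ) τ, ∃ δ > 0, ∀ s ∈ Icc (0:ℝ) τ,
      |s - t| < δ → dist (mfun s) (mfun t) ≤ ε := by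
    intro ε hε t ht
    obtain ⟨c, hc, hcsep⟩ := hsep ε hε
    obtain ⟨_, _, _, _, _, _, _, _, _, _, hEq⟩ := hR0
    obtain ⟨δ, hδ, hδ'⟩ := hEq t ht (c / 3) (by linarith)
    refine ⟨δ, hδ, fun s hs hst => ?_⟩
    by_contra hgt
    push_neg at hgt
    have h1 := hcsep t ht (mfun s) hgt
    have h2 := hδ' s hs hst (mfun s)
    have h3 := hδ' s hs hst (mfun t)
    have h4 := (hmin s hs).1 (mfun t)
    have h5 : |Mfun (mfun s) s - Mfun (mfun s) t| ≤ c / 3 := h2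
    have h6 : |Mfun (mfun t) s - Mfun (mfun t) t| ≤ c / 3 := h3
    have ha := abs_le.1 h5
    have hb := abs_le.1 h6
    linarith
  constructor
  · intro t ht
    rw [Metric.continuousWithinAt_iff]
    intro ε hε
    obtain ⟨δ, hδ, hδ'⟩ := key (ε / 2) (by linarith) t ht
    refine ⟨δ, hδ, fun s hs hst => ?_⟩
    have := hδ' s hs (by rwa [Real.dist_eq] at hst)
    linarith
  · intro ε hε
    have hcont : ContinuousOn mfun (Icc (0:ℝ) τ) := by
      intro t ht
      rw [Metric.continuousWithinAt_iff]
      intro ε' hε'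
      obtain ⟨δ, hδ, hδ'⟩ := key (ε' / 2) (by linarith) t ht
      refine ⟨δ, hδ, fun s hs hst => ?_⟩
      have := hδ' s hs (by rwa [Real.dist_eq] at hst)
      linarith
    have hUC : UniformContinuousOn mfun (Icc (0:ℝ) τ) :=
      (isCompact_Icc).uniformContinuousOn_of_continuous hcont
    rw [Metric.uniformContinuousOn_iff] at hUC
    obtain ⟨δ, hδ, hδ'⟩ := hUC ε hε
    exact ⟨δ, hδ, fun s hs t ht hst => hδ' s hs t ht (by rwa [Real.dist_eq])⟩
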